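/- arXiv:1806.00944 — 4 statements merged into one kernel-verified Lean document; each statement's English description precedes it below -/
import Mathlib

section
/- Let n ≥ 1, γ ∈ (0, 1/8), S₀ > 0, and let Ω ⊂ ℝⁿ be a bounded (γ, S₀)-Reifenberg flat domain. Then the following measure density conditions hold: (i) for every y ∈ Ω and every 0 < r ≤ S₀ one has vol(B_r(y)) ≤ (2/(1−γ))ⁿ · vol(B_r(y) ∩ Ω), and moreover (2/(1−γ))ⁿ ≤ (16/7)ⁿ; (ii) for every y ∈ ∂Ω and every 0 < r ≤ S₀ one has vol(Ωᶜ ∩ B_r(y)) ≥ ((1−γ)/2)ⁿ · vol(B_r(y)), and moreover ((1−γ)/2)ⁿ ≥ (7/16)ⁿ. Here vol denotes n-dimensional Lebesgue measure, B_r(y) the open Euclidean ball, and ∂Ω the topological boundary of Ω. -/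
/-!
Both bounds come from placing a set of volume at least `|B_ρ|`, `ρ = (1 - γ) r / 2`, inside
the region in question. After the isometry of the Reifenberg condition at scale `r`, the ball
of radius `ρ` centred at `±(1 + γ) r / 2 • eₙ` lies in `B_r(0) ∩ {±yₙ > γ r}`, hence in `Ω`
(resp. `Ωᶜ`). This gives (ii) directly, flattening at the boundary point `y` itself.

For (i), let `d = dist(y, Ωᶜ)`, attained at `x₀ ∈ ∂Ω`. If `d ≥ ρ`, take `B_ρ(y)`; otherwise
flatten at `x₀`, so that `|y| = d`. Since `B_d(y) ⊆ Ω` does not reach below `-γ r`,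
`yₙ ≥ d - γ r`. If `d² ≤ (1 + γ) r yₙ`, the upper ball above lies within `(1 + γ) r / 2` of
`y`, hence in `B_r(y) ∩ Ω`. Otherwise `d ≤ r / 4`: for `n ≥ 2` a half ball of radius `3ρ/2`
resting on `{yₙ = 2 γ r}` fits, of volume `(3/2)ⁿ / 2 · |B_ρ| ≥ |B_ρ|`; for `n = 1` we have
`y = -d`, and the disjoint intervals `B_d(y)` and `(γ r, r - d)` have total length `≥ 2ρ`.
-/

open MeasureTheory Metric Set

theorem IsometryEquiv.volume_image {E : Type*} [NormedAddCommGroup E] [InnerProductSpace ℝ E]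
    [FiniteDimensional ℝ E] [MeasurableSpace E] [BorelSpace E] (T : E ≃ᵢ E) (s : Set E) :
    volume (T '' s) = volume s := by
  have hT : MeasurePreserving T.symm := by
    have : ⇑T.symm = (· + T.symm 0) ∘ T.symm.toRealLinearIsometryEquiv := by
      ext1 x; simp
    rw [this]
    exact (measurePreserving_add_right _ _).comp
      T.symm.toRealLinearIsometryEquiv.measurePreserving
  rw [← T.preimage_symm, hT.measure_preimage_emb T.symm.toHomeomorph.measurableEmbedding]

section

variable {n : ℕ}

theorem EuclideanSpace.abs_sub_apply_lt_of_mem_ball {z c : EuclideanSpace ℝ (Fin n)} {ρ : ℝ}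
    (hz : z ∈ ball c ρ) (i : Fin n) : |z i - c i| < ρ :=
  (PiLp.dist_apply_le z c i).trans_lt hz

theorem volume_ball_le_two_mul_volume_ball_inter (c : EuclideanSpace ℝ (Fin n)) (R : ℝ)
    (i : Fin n) : volume (ball c R) ≤ 2 * volume (ball c R ∩ {z | c i ≤ z i}) := by
  have hflip : (fun z => (2 : ℝ) • c - z) ⁻¹' (ball c R ∩ {z | c i < z i})
      = ball c R ∩ {z | z i < c i} := by
    ext z
    simp only [mem_preimage, mem_inter_iff, mem_ball, mem_ofPred_eq, dist_eq_norm,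
      PiLp.sub_apply, PiLp.smul_apply, smul_eq_mul]
    rw [show (2 : ℝ) • c - z - c = -(z - c) by module, norm_neg]
    constructor <;> rintro ⟨h1, h2⟩ <;> exact ⟨h1, by linarith⟩
  have hlower :
      volume (ball c R ∩ {z | z i < c i}) ≤ volume (ball c R ∩ {z | c i ≤ z i}) := by
    rw [← hflip, (Measure.measurePreserving_sub_left volume _).measure_preimage
      (isOpen_ball.inter (isOpen_lt continuous_const (by fun_prop))).nullMeasurableSet]
    exact measure_mono (inter_subset_inter_right _ fun _ h => le_of_lt (show c i < _ from h))
  calc volume (ball c R)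
      ≤ volume (ball c R ∩ {z | c i ≤ z i}) + volume (ball c R ∩ {z | z i < c i}) := by
        refine (measure_mono fun z hz => ?_).trans (measure_union_le _ _)
        rcases le_or_gt (c i) (z i) with h | h
        exacts [Or.inl ⟨hz, h⟩, Or.inr ⟨hz, h⟩]
    _ ≤ 2 * volume (ball c R ∩ {z | c i ≤ z i}) := by rw [two_mul]; gcongr

theorem IsOpen.exists_mem_frontier_infDist_compl_eq_dist {E : Type*} [NormedAddCommGroup E]
    [NormedSpace ℝ E] [ProperSpace E] {Ω : Set E} (hΩ : IsOpen Ω) (hne : Ωᶜ.Nonempty) {y : E}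
    (hy : y ∈ Ω) : ∃ x ∈ frontier Ω, infDist y Ωᶜ = dist y x := by
  obtain ⟨x, hx, hxd⟩ := hΩ.isClosed_compl.exists_infDist_eq_dist hne y
  have hpos : 0 < infDist y Ωᶜ := (infDist_pos_iff_notMem_closure hne).1
    (by rwa [hΩ.isClosed_compl.closure_eq, notMem_compl_iff])
  have hxcl : x ∈ closure Ω := by
    refine closure_mono (ball_infDist_compl_subset (x := y)) ?_
    rw [closure_ball _ hpos.ne', mem_closedBall, dist_comm, hxd]
  exact ⟨x, hΩ.frontier_eq ▸ ⟨hxcl, hx⟩, hxd⟩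

-- What the Reifenberg condition at scale `r` says about `T '' Ω`, with normal direction `eᵢ`.
def IsFlatInBall (U : Set (EuclideanSpace ℝ (Fin n))) (i : Fin n) (γ r : ℝ) : Prop :=
  ball 0 r ∩ {z | γ * r < z i} ⊆ U ∧ ∀ z ∈ U ∩ ball 0 r, -(γ * r) < z i

theorem EuclideanSpace.ball_single_subset_ball_zero {i : Fin n} {a ρ r : ℝ} (h : |a| + ρ ≤ r) :
    ball (EuclideanSpace.single i a) ρ ⊆ ball 0 r :=
  ball_subset_ball' (by rwa [dist_zero_right, PiLp.norm_single, Real.norm_eq_abs,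
    add_comm])

namespace IsFlatInBall

variable {i : Fin n} {U : Set (EuclideanSpace ℝ (Fin n))} {γ r d : ℝ}
  {y : EuclideanSpace ℝ (Fin n)}

theorem sub_le_apply (hU : IsFlatInBall U i γ r) (hd : 0 < d) (hdr : 2 * d < r) (hy : ‖y‖ ≤ d)
    (hball : ball y d ⊆ U) : d - γ * r ≤ y i := by
  by_contra! h
  set s := max 0 (y i + γ * r)
  have hs0 : 0 ≤ s := le_max_left _ _
  have hsd : s < d := max_lt hd (by linarith)
  have hz : y - EuclideanSpace.single i s ∈ ball y d := by
    rwa [mem_ball, dist_eq_norm, sub_sub_cancel_left, norm_neg, PiLp.norm_single,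
      Real.norm_eq_abs, abs_of_nonneg hs0]
  have hz' : y - EuclideanSpace.single i s ∈ ball 0 r := by
    rw [mem_ball_zero_iff]
    calc ‖y - EuclideanSpace.single i s‖
        ≤ ‖y‖ + ‖EuclideanSpace.single i s‖ := norm_sub_le _ _
      _ < r := by
        rw [PiLp.norm_single, Real.norm_eq_abs, abs_of_nonneg hs0]; linarith
  have := hU.2 _ ⟨hball hz, hz'⟩
  simp only [PiLp.sub_apply, PiLp.single_eq_same] at this
  linarith [le_max_right 0 (y i + γ * r)]

theorem ball_single_subset (hU : IsFlatInBall U i γ r) (hγ : 0 ≤ γ) (hr : 0 ≤ r) :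
    ball (EuclideanSpace.single i ((1 + γ) / 2 * r)) ((1 - γ) / 2 * r) ⊆ U := fun z hz => by
  refine hU.1 ⟨EuclideanSpace.ball_single_subset_ball_zero ?_ hz, ?_⟩
  · rw [abs_of_nonneg (by positivity)]; linarith
  · have := abs_lt.1 (EuclideanSpace.abs_sub_apply_lt_of_mem_ball hz i)
    simp only [PiLp.single_eq_same] at this
    show γ * r < z i
    linarith [this.1]

theorem ball_single_neg_subset_compl (hU : IsFlatInBall U i γ r) (hγ : 0 ≤ γ) (hr : 0 ≤ r) :
    ball (EuclideanSpace.single i (-((1 + γ) / 2 * r))) ((1 - γ) / 2 * r) ⊆ Uᶜ ∩ ball 0 r :=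
    fun z hz => by
  have hz₀ : z ∈ ball 0 r := EuclideanSpace.ball_single_subset_ball_zero
    (by rw [abs_neg, abs_of_nonneg (by positivity)]; linarith) hz
  refine ⟨fun hzU => ?_, hz₀⟩
  have := abs_lt.1 (EuclideanSpace.abs_sub_apply_lt_of_mem_ball hz i)
  simp only [PiLp.single_eq_same] at this
  linarith [hU.2 z ⟨hzU, hz₀⟩, this.2]

theorem ball_single_subset_inter (hU : IsFlatInBall U i γ r) (hγ : 0 ≤ γ) (hr : 0 ≤ r)
    (hy : ‖y‖ = d) (hA : d ^ 2 ≤ (1 + γ) * r * y i) :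
    ball (EuclideanSpace.single i ((1 + γ) / 2 * r)) ((1 - γ) / 2 * r) ⊆ ball y r ∩ U := by
  have hc : dist (EuclideanSpace.single i ((1 + γ) / 2 * r)) y ≤ (1 + γ) / 2 * r := by
    have ha : 0 ≤ (1 + γ) / 2 * r := by positivity
    rw [dist_eq_norm, ← pow_le_pow_iff_left₀ (norm_nonneg _) ha two_ne_zero, norm_sub_sq_real,
      PiLp.norm_single, EuclideanSpace.inner_single_left, hy]
    simp only [Real.norm_eq_abs, sq_abs, map_mul, conj_trivial]
    nlinarith
  exact subset_inter (ball_subset_ball' (by linarith)) (hU.ball_single_subset hγ hr)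

theorem volume_ball_le_of_two_le (hU : IsFlatInBall U i γ r) (hn : 2 ≤ n)
    (hγ : γ ∈ Ioo 0 (1 / 8)) (hr : 0 < r) (hy : ‖y‖ ≤ d) (hyi : d - γ * r ≤ y i)
    (hd : d ≤ r / 4) :
    volume (ball (0 : EuclideanSpace ℝ (Fin n)) ((1 - γ) / 2 * r)) ≤
      volume (ball y r ∩ U) := by
  obtain ⟨hγ0, hγ8⟩ := hγ
  set s := 2 * γ * r - y i / 2 with hs
  -- `c` is the midpoint of `0` and `y` moved to height `2 γ r`, so it is within `d / 2 + |s|`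
  -- of both.
  set c : EuclideanSpace ℝ (Fin n) := (1 / 2 : ℝ) • y + EuclideanSpace.single i s
  set R := 3 / 2 * ((1 - γ) / 2 * r) with hR
  have hci : c i = 2 * γ * r := by
    simp only [c, s, PiLp.add_apply, PiLp.smul_apply, PiLp.single_eq_same, smul_eq_mul]; ring
  have hγr : γ * r < r / 8 := by nlinarith
  have hyi' : y i ≤ d := (le_abs_self _).trans ((PiLp.norm_apply_le y i).trans hy)
  have hcR : d / 2 + |s| + R ≤ r := by
    rcases abs_cases s with ⟨h, -⟩ | ⟨h, -⟩ <;> rw [h] <;> linarith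
  have hc₀ : ‖c‖ ≤ d / 2 + |s| := by
    refine (norm_add_le _ _).trans ?_
    rw [norm_smul, PiLp.norm_single, Real.norm_eq_abs, Real.norm_eq_abs]
    norm_num; linarith
  have hcy : ‖c - y‖ ≤ d / 2 + |s| := by
    rw [show c - y = EuclideanSpace.single i s - (1 / 2 : ℝ) • y by simp only [c]; module]
    refine (norm_sub_le _ _).trans ?_
    rw [norm_smul, PiLp.norm_single, Real.norm_eq_abs, Real.norm_eq_abs]
    norm_num; linarith
  have hhalf : ball c R ∩ {z | c i ≤ z i} ⊆ ball y r ∩ U := fun z ⟨hz, hzi⟩ => by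
    refine ⟨ball_subset_ball' (by rw [dist_eq_norm]; linarith) hz, hU.1 ⟨?_, ?_⟩⟩
    · exact ball_subset_ball' (by rw [dist_zero_right]; linarith) hz
    · show γ * r < z i
      linarith [mul_pos hγ0 hr, show c i ≤ z i from hzi]
  have h2 : (2 : ENNReal) ≤ ENNReal.ofReal ((3 / 2) ^ n) := by
    rw [← ENNReal.ofReal_ofNat]
    exact ENNReal.ofReal_le_ofReal
      (by nlinarith [pow_le_pow_right₀ (by norm_num : (1 : ℝ) ≤ 3 / 2) hn])
  refine (ENNReal.mul_le_mul_iff_right two_ne_zero ENNReal.ofNat_ne_top).1 ?_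
  calc 2 * volume (ball (0 : EuclideanSpace ℝ (Fin n)) ((1 - γ) / 2 * r))
      ≤ ENNReal.ofReal ((3 / 2) ^ n)
          * volume (ball (0 : EuclideanSpace ℝ (Fin n)) ((1 - γ) / 2 * r)) := by
        gcongr
    _ = volume (ball c R) := by
        rw [hR, Measure.addHaar_ball_mul_of_pos volume c (by norm_num : (0 : ℝ) < 3 / 2),
          finrank_euclideanSpace_fin]
    _ ≤ 2 * volume (ball c R ∩ {z | c i ≤ z i}) :=
        volume_ball_le_two_mul_volume_ball_inter c R i
    _ ≤ 2 * volume (ball y r ∩ U) := by gcongr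

theorem volume_ball_le_of_fin_one {i : Fin 1} {U : Set (EuclideanSpace ℝ (Fin 1))} {γ r d : ℝ}
    {y : EuclideanSpace ℝ (Fin 1)} (hU : IsFlatInBall U i γ r) (hγ : 0 ≤ γ) (hr : 0 ≤ r)
    (hd : 0 ≤ d) (hdr : d ≤ (1 - γ) * r) (hyi : y i = -d) (hball : ball y d ⊆ U) :
    volume (ball (0 : EuclideanSpace ℝ (Fin 1)) ((1 - γ) / 2 * r)) ≤
      volume (ball y r ∩ U) := by
  have hy : y = EuclideanSpace.single i (-d) := by
    ext j; rw [Subsingleton.elim j i, hyi, PiLp.single_eq_same]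
  have hγr : 0 ≤ γ * r := mul_nonneg hγ hr
  set m := ((1 + γ) * r - d) / 2 with hm
  set ρ := ((1 - γ) * r - d) / 2 with hρ
  have hcU : ball (EuclideanSpace.single i m) ρ ⊆ ball y r ∩ U := fun z hz => by
    have hzi := abs_lt.1 (EuclideanSpace.abs_sub_apply_lt_of_mem_ball hz i)
    rw [PiLp.single_eq_same] at hzi
    refine ⟨ball_subset_ball' ?_ hz,
      hU.1 ⟨EuclideanSpace.ball_single_subset_ball_zero ?_ hz, ?_⟩⟩
    · rw [hy, PiLp.dist_single_same, Real.dist_eq, abs_of_nonneg (by linarith)]; linarith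
    · rw [abs_of_nonneg (by linarith)]; linarith
    · show γ * r < z i
      linarith
  have hyU : ball y d ⊆ ball y r ∩ U :=
    subset_inter (ball_subset_ball (by linarith)) hball
  have hdisj : Disjoint (ball (EuclideanSpace.single i m) ρ) (ball y d) :=
    Set.disjoint_left.2 fun z hz hz' => by
      have h₁ := abs_lt.1 (EuclideanSpace.abs_sub_apply_lt_of_mem_ball hz i)
      have h₂ := abs_lt.1 (EuclideanSpace.abs_sub_apply_lt_of_mem_ball hz' i)
      rw [PiLp.single_eq_same] at h₁
      linarith
  calc volume (ball (0 : EuclideanSpace ℝ (Fin 1)) ((1 - γ) / 2 * r))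
      ≤ volume (ball (EuclideanSpace.single i m) ρ) + volume (ball y d) := by
        rw [Measure.addHaar_ball volume _ (by linarith : 0 ≤ (1 - γ) / 2 * r),
          Measure.addHaar_ball volume _ (by linarith : 0 ≤ ρ), Measure.addHaar_ball volume y hd,
          ← add_mul, ← ENNReal.ofReal_add (by positivity) (by positivity),
          finrank_euclideanSpace_fin, pow_one, pow_one, pow_one]
        gcongr
        linarith
    _ = volume (ball (EuclideanSpace.single i m) ρ ∪ ball y d) :=
        (measure_union hdisj measurableSet_ball).symm
    _ ≤ volume (ball y r ∩ U) := measure_mono (union_subset hcU hyU)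

theorem volume_ball_le_volume_ball_inter (hU : IsFlatInBall U i γ r) (hγ : γ ∈ Ioo 0 (1 / 8))
    (hr : 0 < r) (hy : ‖y‖ = d) (hd : 0 < d) (hdr : d < (1 - γ) / 2 * r)
    (hball : ball y d ⊆ U) :
    volume (ball (0 : EuclideanSpace ℝ (Fin n)) ((1 - γ) / 2 * r)) ≤
      volume (ball y r ∩ U) := by
  obtain ⟨hγ0, hγ8⟩ := hγ
  have hyi := hU.sub_le_apply hd (by nlinarith) hy.le hball
  by_cases hA : d ^ 2 ≤ (1 + γ) * r * y i
  · rw [← Measure.addHaar_ball_center volume (EuclideanSpace.single i ((1 + γ) / 2 * r))]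
    exact measure_mono (hU.ball_single_subset_inter hγ0.le hr.le hy hA)
  have hd4 : d ≤ r / 4 := by
    by_contra! h
    nlinarith [mul_pos (sub_pos.2 h) (sub_pos.2 hdr), mul_pos (sub_pos.2 h) hr,
      mul_pos (mul_pos hγ0 (sub_pos.2 hγ8)) (mul_pos hr hr), mul_pos hγ0 hr]
  rcases Nat.lt_or_ge n 2 with hn | hn
  · obtain rfl : n = 1 := by have := i.pos; omega
    have habs : |y i| = d := by
      rw [← hy, EuclideanSpace.norm_eq, Fin.sum_univ_one, Real.norm_eq_abs, sq_abs,
        Real.sqrt_sq_eq_abs, Subsingleton.elim i 0]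
    have hyi' : y i = -d := by
      rcases (abs_eq hd.le).1 habs with h | h
      · exact absurd (by rw [h]; nlinarith) hA
      · exact h
    exact hU.volume_ball_le_of_fin_one hγ0.le hr.le hd.le (by linarith) hyi' hball
  · exact hU.volume_ball_le_of_two_le hn ⟨hγ0, hγ8⟩ hr hy.le hyi hd4

end IsFlatInBall

theorem volume_ball_le_volume_ball_inter_of_isFlatInBall {Ω : Set (EuclideanSpace ℝ (Fin n))}
    {i : Fin n} {γ r : ℝ} (hγ : γ ∈ Ioo 0 (1 / 8)) (hr : 0 < r) (hΩ : IsOpen Ω)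
    (hΩc : Ωᶜ.Nonempty)
    (hflat : ∀ x₀ ∈ frontier Ω, ∃ T : EuclideanSpace ℝ (Fin n) ≃ᵢ EuclideanSpace ℝ (Fin n),
      T x₀ = 0 ∧ IsFlatInBall (T '' Ω) i γ r)
    {y : EuclideanSpace ℝ (Fin n)} (hy : y ∈ Ω) :
    volume (ball (0 : EuclideanSpace ℝ (Fin n)) ((1 - γ) / 2 * r)) ≤
      volume (ball y r ∩ Ω) := by
  obtain ⟨x₀, hx₀, hdx⟩ := hΩ.exists_mem_frontier_infDist_compl_eq_dist hΩc hy
  set d := infDist y Ωᶜ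
  have hball : ball y d ⊆ Ω := ball_infDist_compl_subset
  rcases le_or_gt ((1 - γ) / 2 * r) d with hd | hd
  · rw [← Measure.addHaar_ball_center volume y]
    exact measure_mono (subset_inter (ball_subset_ball (by nlinarith [hγ.1]))
      ((ball_subset_ball hd).trans hball))
  obtain ⟨T, hT0, hU⟩ := hflat x₀ hx₀
  have hTy : ‖T y‖ = d := by rw [← dist_zero_right, ← hT0, T.dist_eq, hdx]
  have hd0 : 0 < d := by
    rw [hdx, dist_pos]
    rintro rfl
    exact (hΩ.frontier_eq ▸ hx₀).2 hy
  have hTball : ball (T y) d ⊆ T '' Ω := T.image_ball y d ▸ image_mono hball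
  calc volume (ball (0 : EuclideanSpace ℝ (Fin n)) ((1 - γ) / 2 * r))
      ≤ volume (ball (T y) r ∩ T '' Ω) :=
        hU.volume_ball_le_volume_ball_inter hγ hr hTy hd0 hd hTball
    _ = volume (ball y r ∩ Ω) := by
        rw [← T.volume_image (ball y r ∩ Ω), image_inter T.injective, T.image_ball]

theorem volume_ball_le_volume_compl_inter_of_isFlatInBall {Ω : Set (EuclideanSpace ℝ (Fin n))}
    {i : Fin n} {γ r : ℝ} (hγ : 0 ≤ γ) (hr : 0 ≤ r) {y : EuclideanSpace ℝ (Fin n)}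
    (T : EuclideanSpace ℝ (Fin n) ≃ᵢ EuclideanSpace ℝ (Fin n)) (hTy : T y = 0)
    (hU : IsFlatInBall (T '' Ω) i γ r) :
    volume (ball (0 : EuclideanSpace ℝ (Fin n)) ((1 - γ) / 2 * r)) ≤
      volume (Ωᶜ ∩ ball y r) := by
  calc volume (ball (0 : EuclideanSpace ℝ (Fin n)) ((1 - γ) / 2 * r))
      = volume (ball (EuclideanSpace.single i (-((1 + γ) / 2 * r))) ((1 - γ) / 2 * r)) :=
        (Measure.addHaar_ball_center _ _ _).symm
    _ ≤ volume ((T '' Ω)ᶜ ∩ ball 0 r) :=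
        measure_mono (hU.ball_single_neg_subset_compl hγ hr)
    _ = volume (Ωᶜ ∩ ball y r) := by
        rw [← T.volume_image (Ωᶜ ∩ ball y r), image_inter T.injective,
          image_compl_eq T.bijective, T.image_ball, hTy]

end

/-- **Measure density for Reifenberg flat domains.**
If `Ω ⊆ ℝⁿ` is a bounded `(γ, S₀)`-Reifenberg flat domain with `γ ∈ (0,1/8)`, then the
measure density conditions hold: for every `y ∈ Ω` and `0 < r ≤ S₀`,
`vol(B_r(y)) ≤ (2/(1-γ))ⁿ vol(B_r(y) ∩ Ω)` with `(2/(1-γ))ⁿ ≤ (16/7)ⁿ`, and for every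
`y ∈ ∂Ω` and `0 < r ≤ S₀`, `vol(Ωᶜ ∩ B_r(y)) ≥ ((1-γ)/2)ⁿ vol(B_r(y))` with
`((1-γ)/2)ⁿ ≥ (7/16)ⁿ`. -/
theorem stmt0 (n : ℕ) (hn : 1 ≤ n) (γ S₀ : ℝ)
    (hγ : γ ∈ Set.Ioo (0 : ℝ) (1/8))
    (Ω : Set (EuclideanSpace ℝ (Fin n)))
    (hΩopen : IsOpen Ω) (hΩbd : Bornology.IsBounded Ω)
    (hReif : ∀ x₀ ∈ frontier Ω, ∀ r : ℝ, 0 < r → r ≤ S₀ →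
      ∃ T : EuclideanSpace ℝ (Fin n) ≃ᵢ EuclideanSpace ℝ (Fin n),
        T x₀ = 0 ∧
        (ball (0 : EuclideanSpace ℝ (Fin n)) r ∩
            {y : EuclideanSpace ℝ (Fin n) | γ * r < y ⟨n - 1, by omega⟩}
          ⊆ (T '' Ω) ∩ ball 0 r) ∧
        ((T '' Ω) ∩ ball 0 r ⊆
          ball (0 : EuclideanSpace ℝ (Fin n)) r ∩
            {y : EuclideanSpace ℝ (Fin n) | -(γ * r) < y ⟨n - 1, by omega⟩})) :
    (∀ y ∈ Ω, ∀ r : ℝ, 0 < r → r ≤ S₀ →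
      volume (ball y r) ≤ ENNReal.ofReal ((2 / (1 - γ)) ^ n) * volume (ball y r ∩ Ω)) ∧
    ((2 / (1 - γ)) ^ n ≤ (16 / 7 : ℝ) ^ n) ∧
    (∀ y ∈ frontier Ω, ∀ r : ℝ, 0 < r → r ≤ S₀ →
      ENNReal.ofReal (((1 - γ) / 2) ^ n) * volume (ball y r) ≤ volume (Ωᶜ ∩ ball y r)) ∧
    ((7 / 16 : ℝ) ^ n ≤ ((1 - γ) / 2) ^ n) := by
  have h1γ : 0 < 1 - γ := by linarith [hγ.2]
  have hflat (r : ℝ) (hr : 0 < r) (hrS : r ≤ S₀) (x₀ : EuclideanSpace ℝ (Fin n))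
      (hx₀ : x₀ ∈ frontier Ω) : ∃ T : EuclideanSpace ℝ (Fin n) ≃ᵢ EuclideanSpace ℝ (Fin n),
        T x₀ = 0 ∧ IsFlatInBall (T '' Ω) ⟨n - 1, by omega⟩ γ r := by
    obtain ⟨T, hT0, h₁, h₂⟩ := hReif x₀ hx₀ r hr hrS
    exact ⟨T, hT0, fun z hz => (h₁ hz).1, fun z hz => (h₂ hz).2⟩
  have : Nonempty (Fin n) := ⟨⟨0, hn⟩⟩
  have hΩc : Ωᶜ.Nonempty :=
    nonempty_compl.2 fun h => NormedSpace.unbounded_univ ℝ _ (h ▸ hΩbd)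
  refine ⟨fun y hy r hr hrS => ?_, ?_, fun y hy r hr hrS => ?_, ?_⟩
  · calc volume (ball y r)
        = ENNReal.ofReal ((2 / (1 - γ)) ^ n)
          * volume (ball (0 : EuclideanSpace ℝ (Fin n)) ((1 - γ) / 2 * r)) := by
          have := Measure.addHaar_ball_mul_of_pos volume y (by positivity : 0 < 2 / (1 - γ))
            ((1 - γ) / 2 * r)
          rwa [finrank_euclideanSpace_fin,
            show 2 / (1 - γ) * ((1 - γ) / 2 * r) = r by field_simp] at this
      _ ≤ _ := mul_le_mul_right (volume_ball_le_volume_ball_inter_of_isFlatInBall hγ hr hΩopen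
            hΩc (hflat r hr hrS) hy) _
  · exact pow_le_pow_left₀ (by positivity)
      (by rw [div_le_div_iff₀ h1γ (by norm_num)]; linarith [hγ.2]) n
  · obtain ⟨T, hT0, hU⟩ := hflat r hr hrS y hy
    calc ENNReal.ofReal (((1 - γ) / 2) ^ n) * volume (ball y r)
        = volume (ball (0 : EuclideanSpace ℝ (Fin n)) ((1 - γ) / 2 * r)) := by
          rw [Measure.addHaar_ball_mul_of_pos volume 0 (by positivity),
            finrank_euclideanSpace_fin, Measure.addHaar_ball_center]
      _ ≤ _ := volume_ball_le_volume_compl_inter_of_isFlatInBall hγ.1.le hr.le T hT0 hU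
  · exact pow_le_pow_left₀ (by norm_num) (by linarith [hγ.2]) n
end

section
/- Let n ≥ 1, let p, q : ℝⁿ × ℝ → ℝ be bounded measurable functions with 2n/(n+2) < p⁻ := inf p ≤ sup p =: p⁺ < ∞ and 1 < q⁻ := inf q ≤ sup q =: q⁺ < ∞, and let d be a fixed exponent with 2n/((n+2)p⁻) < d < min{ 2/p⁺, 1 }. Let α > 1, c_p > 1, c_q > 1, let z̄ = (x̄, t̄) ∈ ℝⁿ × ℝ and r > 0, and let F = { Q_{ρ_j}^{α_j}(z_j) }_{j ∈ J} be any family of intrinsic parabolic cylinders, all contained in Q_{2r}(z̄) := B_{2r}(x̄) × (t̄ − 4r², t̄ + 4r²), where ρ_j > 0 and α_j := α^{ q⁻_{Q_{4r}(z̄)} / q(z_j) } with q⁻_{Q_{4r}(z̄)} := inf of q over Q_{4r}(z̄) := B_{4r}(x̄) × (t̄ − 16r², t̄ + 16r²). Assume that for every j ∈ J: α_j^{ (sup of p over Q_{ρ_j}^{α_j}(z_j)) − (inf of p over Q_{ρ_j}^{α_j}(z_j)) } ≤ c_p and α_j^{ (sup of q over Q_{ρ_j}^{α_j}(z_j)) −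 (inf of q over Q_{ρ_j}^{α_j}(z_j)) } ≤ c_q. Then there exist a constant χ ≥ 1 depending only on n, c_p, c_q, p⁻, p⁺, q⁻, q⁺ and d, and a countable subset I ⊂ J, such that the cylinders { Q_{ρ_i}^{α_i}(z_i) }_{i ∈ I} are pairwise disjoint and ⋃_{j ∈ J} Q_{ρ_j}^{α_j}(z_j) ⊂ ⋃_{i ∈ I} Q_{χ ρ_i}^{α_i}(z_i). -/
/-!
Vitali's covering lemma, with the spatial radii as size function, selects a countable disjoint
subfamily such that every cylinder meets a selected one of at least half its spatial radius.
For intersecting cylinders the oscillation bound on `q` gives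
`|log α_i - log α_j| ≤ 2 log c_q / q⁻`, and together with the one on `p` it bounds
`α_j ^ (1/p(z_i) - 1/p(z_j))`. Hence comparable spatial radii force comparable `ρ`'s and time
lengths, and a fixed dilate of the selected cylinder contains the other one.
-/

open MeasureTheory Metric Set

/-- The intrinsic parabolic cylinder
`Q_ρ^λ(z) = B(x, λ^{d/2 − 1/p(z)} ρ) × (t − λ^{d−1} ρ², t + λ^{d−1} ρ²)`. -/
noncomputable def intrinsicCyl (n : ℕ) (p : EuclideanSpace ℝ (Fin n) × ℝ → ℝ)
    (d lam ρ : ℝ) (z : EuclideanSpace ℝ (Fin n) × ℝ) :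
    Set (EuclideanSpace ℝ (Fin n) × ℝ) :=
  (Metric.ball z.1 (lam ^ (d/2 - 1/(p z)) * ρ)) ×ˢ
    (Set.Ioo (z.2 - lam ^ (d - 1) * ρ ^ 2) (z.2 + lam ^ (d - 1) * ρ ^ 2))

open Real

noncomputable def osc {X : Type*} (f : X → ℝ) (S : Set X) : ℝ := sSup (f '' S) - sInf (f '' S)

section Oscillation

variable {X : Type*} {f : X → ℝ} {S T : Set X} {m M : ℝ}

lemma sub_le_osc (hf : ∀ x ∈ S, f x ∈ Icc m M) {x y : X} (hx : x ∈ S) (hy : y ∈ S) :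
    f x - f y ≤ osc f S := by
  have hS : BddAbove (f '' S) := ⟨M, forall_mem_image.2 fun x hx => (hf x hx).2⟩
  have hS' : BddBelow (f '' S) := ⟨m, forall_mem_image.2 fun x hx => (hf x hx).1⟩
  unfold osc
  linarith [le_csSup hS (mem_image_of_mem f hx), csInf_le hS' (mem_image_of_mem f hy)]

lemma osc_nonneg (hf : ∀ x ∈ S, f x ∈ Icc m M) {x : X} (hx : x ∈ S) : 0 ≤ osc f S := by
  simpa using sub_le_osc hf hx hx

lemma osc_le (hf : ∀ x ∈ S, f x ∈ Icc m M) (hS : S.Nonempty) : osc f S ≤ M - m :=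
  sub_le_sub (csSup_le (hS.image f) (forall_mem_image.2 fun x hx => (hf x hx).2))
    (le_csInf (hS.image f) (forall_mem_image.2 fun x hx => (hf x hx).1))

lemma sub_le_osc_add_osc (hf : ∀ x, f x ∈ Icc m M) {w x y : X} (hw : w ∈ S ∩ T) (hx : x ∈ S)
    (hy : y ∈ T) : f y - f x ≤ osc f S + osc f T := by
  linarith [sub_le_osc (fun z _ => hf z) hw.1 hx, sub_le_osc (fun z _ => hf z) hy hw.2]

end Oscillation

lemma mul_log_le_log_of_rpow_le {x e c : ℝ} (hx : 0 < x) (h : x ^ e ≤ c) :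
    log x * e ≤ log c := by
  simpa [log_rpow hx, mul_comm] using log_le_log (rpow_pos_of_pos hx e) h

lemma mul_one_div_sub_one_div_le {κ m a b x y : ℝ} (hκ : 0 ≤ κ) (hm : 0 < m) (ha : m ≤ a)
    (hb : m ≤ b) (hx : 0 ≤ x) (hy : 0 ≤ y) (hba : b - a ≤ x + y) :
    κ * (1 / a - 1 / b) ≤ (κ * x / a + κ * y / b) / m := by
  have ha0 : 0 < a := hm.trans_le ha
  have hb0 : 0 < b := hm.trans_le hb
  calc κ * (1 / a - 1 / b) = κ * (b - a) / (a * b) := by field_simp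
    _ ≤ κ * (x + y) / (a * b) := by gcongr
    _ = κ * x / a / b + κ * y / b / a := by field_simp
    _ ≤ κ * x / a / m + κ * y / b / m := by gcongr
    _ = (κ * x / a + κ * y / b) / m := by ring

lemma rpow_le_exp_mul_rpow {x y a : ℝ} (hx : 0 < x) (hy : 0 < y) (h : |log x - log y| ≤ a)
    (e : ℝ) : x ^ e ≤ exp (a * |e|) * y ^ e := by
  rw [rpow_def_of_pos hx, rpow_def_of_pos hy, ← exp_add, exp_le_exp]
  have := (le_abs_self _).trans ((abs_mul (log x - log y) e).trans_le
    (mul_le_mul_of_nonneg_right h (abs_nonneg e)))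
  linarith

section IntrinsicScaling

variable {li lj ρi ρj pi pj d a c E : ℝ}

lemma le_mul_of_rpow_mul_le_two_mul (hli : 0 < li) (hlj : 0 < lj) (ha : |log li - log lj| ≤ a)
    (hc : log lj * (1 / pi - 1 / pj) ≤ c) (hE : |d / 2 - 1 / pi| ≤ E)
    (h : li ^ (d / 2 - 1 / pi) * ρi ≤ 2 * (lj ^ (d / 2 - 1 / pj) * ρj)) (hρj : 0 ≤ ρj) :
    ρi ≤ 2 * exp (c + a * E) * ρj := by
  have hlj_pow : lj ^ (d / 2 - 1 / pj) ≤ exp (c + a * E) * li ^ (d / 2 - 1 / pi) :=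
    calc lj ^ (d / 2 - 1 / pj) = lj ^ (1 / pi - 1 / pj) * lj ^ (d / 2 - 1 / pi) := by
          rw [← rpow_add hlj]; ring_nf
      _ ≤ exp c * (exp (a * |d / 2 - 1 / pi|) * li ^ (d / 2 - 1 / pi)) := by
          gcongr
          · rw [rpow_def_of_pos hlj]; exact exp_le_exp.2 hc
          · exact rpow_le_exp_mul_rpow hlj hli (abs_sub_comm (log li) _ ▸ ha) _
      _ ≤ exp c * (exp (a * E) * li ^ (d / 2 - 1 / pi)) := by
          gcongr
          exact (abs_nonneg _).trans ha
      _ = exp (c + a * E) * li ^ (d / 2 - 1 / pi) := by rw [exp_add]; ring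
  refine le_of_mul_le_mul_left ?_ (rpow_pos_of_pos hli (d / 2 - 1 / pi))
  calc li ^ (d / 2 - 1 / pi) * ρi ≤ 2 * (lj ^ (d / 2 - 1 / pj) * ρj) := h
    _ ≤ 2 * (exp (c + a * E) * li ^ (d / 2 - 1 / pi) * ρj) := by gcongr
    _ = li ^ (d / 2 - 1 / pi) * (2 * exp (c + a * E) * ρj) := by ring

lemma rpow_mul_sq_le_of_rpow_mul_le_two_mul (hli : 0 < li) (hlj : 0 < lj)
    (ha : |log li - log lj| ≤ a) (hc : log lj * (1 / pi - 1 / pj) ≤ c) (hE : |d / 2 - 1 / pi| ≤ E)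
    (h : li ^ (d / 2 - 1 / pi) * ρi ≤ 2 * (lj ^ (d / 2 - 1 / pj) * ρj)) (hρi : 0 ≤ ρi)
    (hρj : 0 ≤ ρj) :
    li ^ (d - 1) * ρi ^ 2
      ≤ exp (a * |d - 1|) * (2 * exp (c + a * E)) ^ 2 * (lj ^ (d - 1) * ρj ^ 2) :=
  calc li ^ (d - 1) * ρi ^ 2 ≤ exp (a * |d - 1|) * lj ^ (d - 1) * (2 * exp (c + a * E) * ρj) ^ 2 :=
        mul_le_mul (rpow_le_exp_mul_rpow hli hlj ha _)
          (pow_le_pow_left₀ hρi (le_mul_of_rpow_mul_le_two_mul hli hlj ha hc hE h hρj) 2)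
          (sq_nonneg _) (by positivity)
    _ = exp (a * |d - 1|) * (2 * exp (c + a * E)) ^ 2 * (lj ^ (d - 1) * ρj ^ 2) := by ring

end IntrinsicScaling

lemma abs_half_sub_one_div_le {d pm p : ℝ} (hpm : 0 < pm) (hp : pm ≤ p) :
    |d / 2 - 1 / p| ≤ |d| / 2 + 1 / pm :=
  calc |d / 2 - 1 / p| ≤ |d / 2| + |1 / p| := abs_sub _ _
    _ = |d| / 2 + 1 / p := by rw [abs_div, abs_two, abs_of_pos (one_div_pos.2 (hpm.trans_le hp))]
    _ ≤ |d| / 2 + 1 / pm := by gcongr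

-- `a` bounds `|log α_i - log α_j|`, and `2 * exp (…)` bounds `ρ_i / ρ_j` when `R_i ≤ 2 R_j`.
noncomputable def timeRatioBound (pm pM qm d cp cq : ℝ) : ℝ :=
  let a := 2 * log cq / qm
  exp (a * |d - 1|) * (2 * exp ((2 * log cp + a * (pM - pm)) / pm ^ 2 + a * (|d| / 2 + 1 / pm))) ^ 2

lemma timeRatioBound_nonneg (pm pM qm d cp cq : ℝ) : 0 ≤ timeRatioBound pm pM qm d cp cq := by
  unfold timeRatioBound
  positivity

section ScaleComparison

variable {X : Type*} {S T : Set X} {x y w : X}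

lemma log_sub_log_le_of_osc {q : X → ℝ} {lx ly κ qm qM cq : ℝ} (hq : ∀ z, q z ∈ Icc qm qM)
    (hqm : 0 < qm) (hκ : 0 ≤ κ) (hw : w ∈ S ∩ T) (hx : x ∈ S) (hy : y ∈ T) (hlx : 0 < lx)
    (hly : 0 < ly) (hlogx : log lx = κ / q x) (hlogy : log ly = κ / q y)
    (hoscx : lx ^ osc q S ≤ cq) (hoscy : ly ^ osc q T ≤ cq) :
    log lx - log ly ≤ 2 * log cq / qm := by
  have hγx := mul_log_le_log_of_rpow_le hlx hoscx
  have hγy := mul_log_le_log_of_rpow_le hly hoscy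
  rw [hlogx] at hγx ⊢
  rw [hlogy] at hγy ⊢
  calc κ / q x - κ / q y = κ * (1 / q x - 1 / q y) := by ring
    _ ≤ (κ * osc q S / q x + κ * osc q T / q y) / qm :=
        mul_one_div_sub_one_div_le hκ hqm (hq x).1 (hq y).1 (osc_nonneg (fun z _ => hq z) hx)
          (osc_nonneg (fun z _ => hq z) hy) (sub_le_osc_add_osc hq hw hx hy)
    _ ≤ 2 * log cq / qm := by
        rw [mul_div_right_comm, mul_div_right_comm κ]
        gcongr
        linarith

lemma abs_log_sub_log_le_of_osc {q : X → ℝ} {lx ly κ qm qM cq : ℝ} (hq : ∀ z, q z ∈ Icc qm qM)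
    (hqm : 0 < qm) (hκ : 0 ≤ κ) (hw : w ∈ S ∩ T) (hx : x ∈ S) (hy : y ∈ T) (hlx : 0 < lx)
    (hly : 0 < ly) (hlogx : log lx = κ / q x) (hlogy : log ly = κ / q y)
    (hoscx : lx ^ osc q S ≤ cq) (hoscy : ly ^ osc q T ≤ cq) :
    |log lx - log ly| ≤ 2 * log cq / qm :=
  abs_sub_le_iff.2
    ⟨log_sub_log_le_of_osc hq hqm hκ hw hx hy hlx hly hlogx hlogy hoscx hoscy,
      log_sub_log_le_of_osc hq hqm hκ ⟨hw.2, hw.1⟩ hy hx hly hlx hlogy hlogx hoscy hoscx⟩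

lemma log_mul_one_div_sub_one_div_le_of_osc {p : X → ℝ} {lx ly pm pM a cp : ℝ}
    (hp : ∀ z, p z ∈ Icc pm pM) (hpm : 0 < pm) (hw : w ∈ S ∩ T) (hx : x ∈ S) (hy : y ∈ T)
    (hlx : 0 < lx) (hly : 1 ≤ ly) (ha : |log lx - log ly| ≤ a)
    (hoscx : lx ^ osc p S ≤ cp) (hoscy : ly ^ osc p T ≤ cp) :
    log ly * (1 / p x - 1 / p y) ≤ (2 * log cp + a * (pM - pm)) / pm ^ 2 := by
  have hS : ∀ z ∈ S, p z ∈ Icc pm pM := fun z _ => hp z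
  have hox := osc_nonneg hS hx
  have hoy := osc_nonneg (fun z _ => hp z) hy
  have hℓy : 0 ≤ log ly := log_nonneg hly
  -- the oscillation bound on `S` is stated with `lx`; trading it for `ly` costs the factor `a`
  have hγx : log ly * osc p S ≤ log cp + a * (pM - pm) := by
    have h1 := mul_log_le_log_of_rpow_le hlx hoscx
    have hla : log ly - log lx ≤ a := (le_abs_self _).trans ((abs_sub_comm _ _).trans_le ha)
    have ha0 : 0 ≤ a := (abs_nonneg _).trans ha
    nlinarith [osc_le hS ⟨x, hx⟩]
  have hγy := mul_log_le_log_of_rpow_le (zero_lt_one.trans_le hly) hoscy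
  calc log ly * (1 / p x - 1 / p y)
      ≤ (log ly * osc p S / p x + log ly * osc p T / p y) / pm :=
        mul_one_div_sub_one_div_le hℓy hpm (hp x).1 (hp y).1 hox hoy
          (sub_le_osc_add_osc hp hw hx hy)
    _ ≤ (log ly * osc p S / pm + log ly * osc p T / pm) / pm := by
        gcongr
        exacts [(hp x).1, (hp y).1]
    _ ≤ (2 * log cp + a * (pM - pm)) / pm ^ 2 := by
        rw [← add_div, div_div, ← sq]
        gcongr ?_ / _
        linarith

lemma rpow_mul_sq_le_timeRatioBound_of_osc {p q : X → ℝ} {lx ly ρx ρy κ pm pM qm qM d cp cq : ℝ}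
    (hp : ∀ z, p z ∈ Icc pm pM) (hq : ∀ z, q z ∈ Icc qm qM) (hpm : 0 < pm) (hqm : 0 < qm)
    (hκ : 0 ≤ κ) (hw : w ∈ S ∩ T) (hx : x ∈ S) (hy : y ∈ T) (hlx : 0 < lx) (hly : 0 < ly)
    (hlogx : log lx = κ / q x) (hlogy : log ly = κ / q y)
    (hpx : lx ^ osc p S ≤ cp) (hpy : ly ^ osc p T ≤ cp)
    (hqx : lx ^ osc q S ≤ cq) (hqy : ly ^ osc q T ≤ cq)
    (hR : lx ^ (d / 2 - 1 / p x) * ρx ≤ 2 * (ly ^ (d / 2 - 1 / p y) * ρy))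
    (hρx : 0 ≤ ρx) (hρy : 0 ≤ ρy) :
    lx ^ (d - 1) * ρx ^ 2 ≤ timeRatioBound pm pM qm d cp cq * (ly ^ (d - 1) * ρy ^ 2) := by
  have ha := abs_log_sub_log_le_of_osc hq hqm hκ hw hx hy hlx hly hlogx hlogy hqx hqy
  have hly1 : 1 ≤ ly := by
    rw [← log_nonneg_iff hly, hlogy]
    exact div_nonneg hκ (hqm.le.trans (hq y).1)
  exact rpow_mul_sq_le_of_rpow_mul_le_two_mul hlx hly ha
    (log_mul_one_div_sub_one_div_le_of_osc hp hpm hw hx hy hlx hly1 ha hpx hpy)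
    (abs_half_sub_one_div_le hpm (hp x).1) hR hρx hρy

end ScaleComparison

section ParabolicCylinder

variable {X : Type*} [PseudoMetricSpace X] {z z' : X × ℝ} {R R' T T' : ℝ}

def parabolicCyl (z : X × ℝ) (R T : ℝ) : Set (X × ℝ) :=
  ball z.1 R ×ˢ Ioo (z.2 - T) (z.2 + T)

lemma mem_parabolicCyl {w : X × ℝ} :
    w ∈ parabolicCyl z R T ↔ dist w.1 z.1 < R ∧ z.2 - T < w.2 ∧ w.2 < z.2 + T :=
  Iff.rfl

lemma center_mem_parabolicCyl (hR : 0 < R) (hT : 0 < T) : z ∈ parabolicCyl z R T :=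
  mem_parabolicCyl.2 ⟨by simpa using hR, by linarith, by linarith⟩

lemma isOpen_parabolicCyl : IsOpen (parabolicCyl z R T) :=
  isOpen_ball.prod isOpen_Ioo

lemma parabolicCyl_mono (hR : R ≤ R') (hT : T ≤ T') :
    parabolicCyl z R T ⊆ parabolicCyl z R' T' :=
  prod_mono (ball_subset_ball hR) (Ioo_subset_Ioo (by linarith) (by linarith))

lemma parabolicCyl_subset_of_inter_nonempty {L : ℝ}
    (h : (parabolicCyl z R T ∩ parabolicCyl z' R' T').Nonempty) (hR : R ≤ 2 * R')
    (hT : T ≤ L * T') : parabolicCyl z R T ⊆ parabolicCyl z' (5 * R') ((2 * L + 1) * T') := by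
  obtain ⟨w, hw, hw'⟩ := h
  rw [mem_parabolicCyl] at hw hw'
  intro y hy
  rw [mem_parabolicCyl] at hy ⊢
  refine ⟨?_, by linarith, by linarith⟩
  calc dist y.1 z'.1 ≤ dist y.1 z.1 + dist w.1 z.1 + dist w.1 z'.1 := by
        linarith [dist_triangle4 y.1 z.1 w.1 z'.1, dist_comm z.1 w.1]
    _ < 5 * R' := by linarith

variable [TopologicalSpace.SeparableSpace X]

theorem exists_countable_disjoint_parabolicCyl_covering {J : Type*} (z : J → X × ℝ)
    (R T : J → ℝ) (hR : ∀ j, 0 < R j) (hT : ∀ j, 0 < T j) {B L : ℝ} (hRB : ∀ j, R j ≤ B)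
    (hTL : ∀ i j, (parabolicCyl (z i) (R i) (T i) ∩ parabolicCyl (z j) (R j) (T j)).Nonempty →
      R i ≤ 2 * R j → T i ≤ L * T j) :
    ∃ I : Set J, I.Countable ∧ I.PairwiseDisjoint (fun i => parabolicCyl (z i) (R i) (T i)) ∧
      ⋃ j, parabolicCyl (z j) (R j) (T j)
        ⊆ ⋃ i ∈ I, parabolicCyl (z i) (5 * R i) ((2 * L + 1) * T i) := by
  have hne : ∀ j, (parabolicCyl (z j) (R j) (T j)).Nonempty :=
    fun j => ⟨z j, center_mem_parabolicCyl (hR j) (hT j)⟩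
  obtain ⟨I, -, hdisj, hcov⟩ := Vitali.exists_disjoint_subfamily_covering_enlargement
    (fun j => parabolicCyl (z j) (R j) (T j)) univ R 2 one_lt_two (fun j _ => (hR j).le) B
    (fun j _ => hRB j) (fun j _ => hne j)
  refine ⟨I, hdisj.countable_of_isOpen (fun _ _ => isOpen_parabolicCyl) (fun i _ => hne i),
    hdisj, iUnion_subset fun j => ?_⟩
  obtain ⟨i, hiI, hji, hRji⟩ := hcov j (mem_univ j)
  exact (parabolicCyl_subset_of_inter_nonempty hji hRji (hTL j i hji hRji)).trans
    (subset_biUnion_of_mem (u := fun i => parabolicCyl (z i) (5 * R i) ((2 * L + 1) * T i)) hiI)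

end ParabolicCylinder

lemma radius_le_of_parabolicCyl_subset {V : Type*} [NormedAddCommGroup V] [NormedSpace ℝ V]
    [Nontrivial V] {z z' : V × ℝ} {R R' T T' : ℝ} (hT : 0 < T) (hR' : 0 ≤ R')
    (h : parabolicCyl z R T ⊆ parabolicCyl z' R' T') : R ≤ R' := by
  rcases le_or_gt R 0 with hR | hR
  · exact hR.trans hR'
  have hball : ball z.1 R ⊆ ball z'.1 R' := fun x hx =>
    (h (show (x, z.2) ∈ parabolicCyl z R T from ⟨hx, by simp [hT]⟩)).1
  have := diam_mono hball isBounded_ball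
  rw [diam_ball_eq _ hR.le, diam_ball_eq _ hR'] at this
  linarith

lemma intrinsicCyl_eq_parabolicCyl {n : ℕ} {p : EuclideanSpace ℝ (Fin n) × ℝ → ℝ}
    {d lam ρ : ℝ} {z : EuclideanSpace ℝ (Fin n) × ℝ} :
    intrinsicCyl n p d lam ρ z
      = parabolicCyl z (lam ^ (d / 2 - 1 / p z) * ρ) (lam ^ (d - 1) * ρ ^ 2) :=
  rfl

lemma intrinsicCyl_mul {n : ℕ} {p : EuclideanSpace ℝ (Fin n) × ℝ → ℝ}
    {d lam ρ : ℝ} {z : EuclideanSpace ℝ (Fin n) × ℝ} (c : ℝ) :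
    intrinsicCyl n p d lam (c * ρ) z
      = parabolicCyl z (c * (lam ^ (d / 2 - 1 / p z) * ρ)) (c ^ 2 * (lam ^ (d - 1) * ρ ^ 2)) := by
  rw [intrinsicCyl_eq_parabolicCyl]
  congr 1 <;> ring

theorem stmt10_general (n : ℕ) (hn : 1 ≤ n)
    (pm pM qm qM d cp cq : ℝ)
    (hpm : 2 * (n : ℝ) / ((n : ℝ) + 2) < pm)
    (hqm : 1 < qm) :
    ∃ χ : ℝ, 1 ≤ χ ∧
      ∀ p q : EuclideanSpace ℝ (Fin n) × ℝ → ℝ,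
        (∀ z, pm ≤ p z ∧ p z ≤ pM) → (∀ z, qm ≤ q z ∧ q z ≤ qM) →
      ∀ α : ℝ, 1 < α →
      ∀ (x₀ : EuclideanSpace ℝ (Fin n)) (t₀ r : ℝ), 0 < r →
      ∀ (J : Type) (zf : J → EuclideanSpace ℝ (Fin n) × ℝ) (ρf : J → ℝ)
        (qlow : ℝ) (αf : J → ℝ),
        qlow = sInf (q '' ((Metric.ball x₀ (4 * r)) ×ˢ
            Set.Ioo (t₀ - 16 * r ^ 2) (t₀ + 16 * r ^ 2))) →
        (∀ j, αf j = α ^ (qlow / q (zf j))) →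
        (∀ j, 0 < ρf j) →
        (∀ j, intrinsicCyl n p d (αf j) (ρf j) (zf j)
            ⊆ (Metric.ball x₀ (2 * r)) ×ˢ Set.Ioo (t₀ - 4 * r ^ 2) (t₀ + 4 * r ^ 2)) →
        (∀ j, (αf j) ^ (sSup (p '' intrinsicCyl n p d (αf j) (ρf j) (zf j))
              - sInf (p '' intrinsicCyl n p d (αf j) (ρf j) (zf j))) ≤ cp) →
        (∀ j, (αf j) ^ (sSup (q '' intrinsicCyl n p d (αf j) (ρf j) (zf j))
              - sInf (q '' intrinsicCyl n p d (αf j) (ρf j) (zf j))) ≤ cq) →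
        ∃ I : Set J, I.Countable ∧
          (I.PairwiseDisjoint fun i => intrinsicCyl n p d (αf i) (ρf i) (zf i)) ∧
          (⋃ j, intrinsicCyl n p d (αf j) (ρf j) (zf j))
            ⊆ ⋃ i ∈ I, intrinsicCyl n p d (αf i) (χ * ρf i) (zf i) := by
  have hpm0 : 0 < pm := lt_of_le_of_lt (by positivity) hpm
  have hqm0 : 0 < qm := by linarith
  have hL := timeRatioBound_nonneg pm pM qm d cp cq
  refine ⟨5 + 2 * timeRatioBound pm pM qm d cp cq, by linarith, ?_⟩
  intro p q hp hq α hα x₀ t₀ r hr J zf ρf qlow αf hqlow hαf hρ hsub hocp hocq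
  have hαf0 : ∀ j, 0 < αf j := fun j => hαf j ▸ rpow_pos_of_pos (by linarith) _
  have hκ : 0 ≤ qlow * log α := mul_nonneg
    (hqlow ▸ Real.sInf_nonneg (forall_mem_image.2 fun w _ => by linarith [(hq w).1]))
    (log_nonneg hα.le)
  have hlog : ∀ j, log (αf j) = qlow * log α / q (zf j) := fun j => by
    rw [hαf, log_rpow (by linarith)]; ring
  set R := fun j => αf j ^ (d / 2 - 1 / p (zf j)) * ρf j
  set T := fun j => αf j ^ (d - 1) * ρf j ^ 2
  have hR : ∀ j, 0 < R j := fun j => mul_pos (rpow_pos_of_pos (hαf0 j) _) (hρ j)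
  have hT : ∀ j, 0 < T j := fun j => mul_pos (rpow_pos_of_pos (hαf0 j) _) (pow_pos (hρ j) 2)
  have hz : ∀ j, zf j ∈ intrinsicCyl n p d (αf j) (ρf j) (zf j) :=
    fun j => center_mem_parabolicCyl (hR j) (hT j)
  have : Nonempty (Fin n) := ⟨⟨0, hn⟩⟩
  obtain ⟨I, hI, hdisj, hcov⟩ := exists_countable_disjoint_parabolicCyl_covering zf R T hR hT
    (fun j => radius_le_of_parabolicCyl_subset (z' := (x₀, t₀)) (R' := 2 * r) (T' := 4 * r ^ 2)
      (hT j) (by positivity) (hsub j))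
    (fun i j ⟨_, hw⟩ hRij => rpow_mul_sq_le_timeRatioBound_of_osc hp hq hpm0 hqm0 hκ hw (hz i)
      (hz j) (hαf0 i) (hαf0 j) (hlog i) (hlog j) (hocp i) (hocp j) (hocq i) (hocq j) hRij
      (hρ i).le (hρ j).le)
  refine ⟨I, hI, hdisj, hcov.trans (iUnion₂_mono fun i _ => ?_)⟩
  rw [intrinsicCyl_mul]
  exact parabolicCyl_mono (mul_le_mul_of_nonneg_right (by linarith) (hR i).le)
    (mul_le_mul_of_nonneg_right (by nlinarith) (hT i).le)

/-- **Vitali-type covering lemma for intrinsic parabolic cylinders.**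
Given exponents `p, q` with `2n/(n+2) < p⁻ ≤ p ≤ p⁺ < ∞`, `1 < q⁻ ≤ q ≤ q⁺ < ∞`, a scaling
parameter `d` with `2n/((n+2)p⁻) < d < min{2/p⁺, 1}`, constants `α, c_p, c_q > 1`, and a
family `{Q_{ρ_j}^{α_j}(z_j)}_{j∈J} ⊆ Q_{2r}(z̄)` of intrinsic cylinders with
`α_j = α^{q⁻_{Q_{4r}(z̄)}/q(z_j)}` satisfying `α_j^{osc_{Q_j} p} ≤ c_p` and
`α_j^{osc_{Q_j} q} ≤ c_q`, there exist `χ = χ(n, c_p, c_q, p±, q±, d) ≥ 1` and a countable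
subfamily of pairwise disjoint cylinders whose `χ`-dilates cover the whole family. -/
theorem stmt10 (n : ℕ) (hn : 1 ≤ n)
    (pm pM qm qM d cp cq : ℝ)
    (hpm : 2 * (n : ℝ) / ((n : ℝ) + 2) < pm) (hpmM : pm ≤ pM)
    (hqm : 1 < qm) (hqmM : qm ≤ qM)
    (hd1 : 2 * (n : ℝ) / (((n : ℝ) + 2) * pm) < d) (hd2 : d < min (2 / pM) 1)
    (hcp : 1 < cp) (hcq : 1 < cq) :
    ∃ χ : ℝ, 1 ≤ χ ∧
      ∀ p q : EuclideanSpace ℝ (Fin n) × ℝ → ℝ,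
        (∀ z, pm ≤ p z ∧ p z ≤ pM) → (∀ z, qm ≤ q z ∧ q z ≤ qM) →
      ∀ α : ℝ, 1 < α →
      ∀ (x₀ : EuclideanSpace ℝ (Fin n)) (t₀ r : ℝ), 0 < r →
      ∀ (J : Type) (zf : J → EuclideanSpace ℝ (Fin n) × ℝ) (ρf : J → ℝ)
        (qlow : ℝ) (αf : J → ℝ),
        qlow = sInf (q '' ((Metric.ball x₀ (4 * r)) ×ˢ
            Set.Ioo (t₀ - 16 * r ^ 2) (t₀ + 16 * r ^ 2))) →
        (∀ j, αf j = α ^ (qlow / q (zf j))) →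
        (∀ j, 0 < ρf j) →
        (∀ j, intrinsicCyl n p d (αf j) (ρf j) (zf j)
            ⊆ (Metric.ball x₀ (2 * r)) ×ˢ Set.Ioo (t₀ - 4 * r ^ 2) (t₀ + 4 * r ^ 2)) →
        (∀ j, (αf j) ^ (sSup (p '' intrinsicCyl n p d (αf j) (ρf j) (zf j))
              - sInf (p '' intrinsicCyl n p d (αf j) (ρf j) (zf j))) ≤ cp) →
        (∀ j, (αf j) ^ (sSup (q '' intrinsicCyl n p d (αf j) (ρf j) (zf j))
              - sInf (q '' intrinsicCyl n p d (αf j) (ρf j) (zf j))) ≤ cq) →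
        ∃ I : Set J, I.Countable ∧
          (I.PairwiseDisjoint fun i => intrinsicCyl n p d (αf i) (ρf i) (zf i)) ∧
          (⋃ j, intrinsicCyl n p d (αf j) (ρf j) (zf j))
            ⊆ ⋃ i ∈ I, intrinsicCyl n p d (αf i) (χ * ρf i) (zf i) :=
  stmt10_general n hn pm pM qm qM d cp cq hpm hqm
end

section
/- Let n ≥ 1 and let p : ℝⁿ × ℝ → ℝ satisfy 2n/(n+2) < p⁻ := inf p ≤ sup p =: p⁺ < ∞, and let d be a fixed exponent with 2n/((n+2)p⁻) < d < min{ 2/p⁺, 1 }. Let S₀ ∈ (0,1) and γ ∈ (0,1], and assume p admits a nondecreasing modulus of continuity ω_p : [0,∞) → [0,∞), i.e. |p(z₁) − p(z₂)| ≤ ω_p(d_p(z₁, z₂)) for all z₁, z₂ ∈ ℝⁿ × ℝ, satisfying ω_p(r) · log(1/r) ≤ γ for all 0 < r ≤ S₀. Let Γ ≥ 2, let 0 < ρ̃ ≤ S₀/Γ², let z̃ ∈ ℝⁿ × ℝ, and let α ≥ 1 satisfy α^{ −n/p(z̃) + nd/2 + d } ≤ Γ · ρ̃^{−(n+2)}.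 Then, writing Q := Q_{ρ̃}^{α}(z̃) for the intrinsic parabolic cylinder, one has (sup of p over Q) − (inf of p over Q) ≤ ω_p(Γ ρ̃) and α^{ (sup of p over Q) − (inf of p over Q) } ≤ exp( (2n+5) / (−n/p⁻ + nd/2 + d) ). -/
open MeasureTheory Metric Set

set_option maxHeartbeats 1600000 in
/-- **Exponent oscillation control on intrinsic cylinders.**
Suppose `2n/(n+2) < p⁻ ≤ p ≤ p⁺ < ∞`, `2n/((n+2)p⁻) < d < min{2/p⁺, 1}`, `p` has a
nondecreasing modulus of continuity `ω_p` (with respect to the parabolic metric) with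
`ω_p(r) log(1/r) ≤ γ` for `0 < r ≤ S₀`, `Γ ≥ 2`, `0 < ρ̃ ≤ S₀/Γ²`, and `α ≥ 1` satisfies
`α^{−n/p(z̃) + nd/2 + d} ≤ Γ ρ̃^{−(n+2)}`.  Then, on `Q = Q_{ρ̃}^α(z̃)`,
`p⁺_Q − p⁻_Q ≤ ω_p(Γ ρ̃)` and `α^{p⁺_Q − p⁻_Q} ≤ exp((2n+5)/(−n/p⁻ + nd/2 + d))`. -/
theorem stmt11 (n : ℕ) (hn : 1 ≤ n)
    (p : EuclideanSpace ℝ (Fin n) × ℝ → ℝ) (pm pM d : ℝ)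
    (hpm : 2 * (n : ℝ) / ((n : ℝ) + 2) < pm) (hpmM : pm ≤ pM)
    (hbd : ∀ z, pm ≤ p z ∧ p z ≤ pM)
    (hd1 : 2 * (n : ℝ) / (((n : ℝ) + 2) * pm) < d) (hd2 : d < min (2 / pM) 1)
    (S₀ γ : ℝ) (hS₀ : S₀ ∈ Set.Ioo (0 : ℝ) 1) (hγ : γ ∈ Set.Ioc (0 : ℝ) 1)
    (ω : ℝ → ℝ) (hωmono : MonotoneOn ω (Set.Ici 0)) (hωnn : ∀ r : ℝ, 0 ≤ r → 0 ≤ ω r)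
    (hωp : ∀ z₁ z₂ : EuclideanSpace ℝ (Fin n) × ℝ,
      |p z₁ - p z₂| ≤ ω (max (dist z₁.1 z₂.1) (Real.sqrt |z₁.2 - z₂.2|)))
    (hωlog : ∀ r : ℝ, 0 < r → r ≤ S₀ → ω r * Real.log (1/r) ≤ γ)
    (Γ : ℝ) (hΓ : 2 ≤ Γ)
    (ρt : ℝ) (hρt : 0 < ρt) (hρtS : ρt ≤ S₀ / Γ ^ 2)
    (zt : EuclideanSpace ℝ (Fin n) × ℝ) (α : ℝ) (hα : 1 ≤ α)
    (hαbd : α ^ (-(n : ℝ) / p zt + (n : ℝ) * d / 2 + d) ≤ Γ * ρt ^ (-((n : ℝ) + 2))) :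
    (sSup (p '' intrinsicCyl n p d α ρt zt) - sInf (p '' intrinsicCyl n p d α ρt zt)
        ≤ ω (Γ * ρt)) ∧
    α ^ (sSup (p '' intrinsicCyl n p d α ρt zt) - sInf (p '' intrinsicCyl n p d α ρt zt))
        ≤ Real.exp ((2 * (n : ℝ) + 5) / (-(n : ℝ) / pm + (n : ℝ) * d / 2 + d)) := by
  have hn1 : (1:ℝ) ≤ (n:ℝ) := by exact_mod_cast hn
  have hα0 : (0:ℝ) < α := lt_of_lt_of_le one_pos hα
  have hΓ0 : (0:ℝ) < Γ := lt_of_lt_of_le two_pos hΓ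
  have hpm0 : (0:ℝ) < pm := lt_trans (by positivity) hpm
  have hpM0 : (0:ℝ) < pM := lt_of_lt_of_le hpm0 hpmM
  have hpz0 : (0:ℝ) < p zt := lt_of_lt_of_le hpm0 (hbd zt).1
  have he1 : d/2 - 1/(p zt) ≤ 0 := by
    have hdpM : d < 2 / pM := lt_of_lt_of_le hd2 (min_le_left _ _)
    have h1 : d * pM < 2 := (lt_div_iff₀ hpM0).mp hdpM
    have h2 : d/2 < 1/pM := by rw [div_lt_div_iff₀ two_pos hpM0]; nlinarith
    have h3 : 1/pM ≤ 1/(p zt) := one_div_le_one_div_of_le hpz0 (hbd zt).2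
    linarith
  have he2 : d - 1 ≤ 0 := by
    have := lt_of_lt_of_le hd2 (min_le_right _ _); linarith
  have hfac1 : α ^ (d/2 - 1/(p zt)) ≤ 1 := Real.rpow_le_one_of_one_le_of_nonpos hα he1
  have hfac2 : α ^ (d - 1) ≤ 1 := Real.rpow_le_one_of_one_le_of_nonpos hα he2
  have hfac1p : (0:ℝ) < α ^ (d/2 - 1/(p zt)) := Real.rpow_pos_of_pos hα0 _
  have hfac2p : (0:ℝ) < α ^ (d - 1) := Real.rpow_pos_of_pos hα0 _
  have hfρ2 : (0:ℝ) < α ^ (d - 1) * ρt ^ 2 := mul_pos hfac2p (pow_pos hρt 2)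
  set Q := intrinsicCyl n p d α ρt zt with hQdef
  have hmem : ∀ z : EuclideanSpace ℝ (Fin n) × ℝ, z ∈ Q ↔
      dist z.1 zt.1 < α ^ (d/2 - 1/(p zt)) * ρt ∧
      zt.2 - α ^ (d-1) * ρt ^ 2 < z.2 ∧ z.2 < zt.2 + α ^ (d-1) * ρt ^ 2 := by
    intro z
    simp [hQdef, intrinsicCyl, Set.mem_prod, Metric.mem_ball, Set.mem_Ioo, and_assoc]
  have hztQ : zt ∈ Q := by
    rw [hmem]
    refine ⟨by rw [dist_self]; positivity, by linarith, by linarith⟩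
  have hSne : (p '' Q).Nonempty := ⟨p zt, zt, hztQ, rfl⟩
  have hbddA : BddAbove (p '' Q) := ⟨pM, by rintro _ ⟨z, _, rfl⟩; exact (hbd z).2⟩
  have hbddB : BddBelow (p '' Q) := ⟨pm, by rintro _ ⟨z, _, rfl⟩; exact (hbd z).1⟩
  have hΓρpos : 0 < Γ * ρt := mul_pos hΓ0 hρt
  have key : ∀ z₁ ∈ Q, ∀ z₂ ∈ Q, p z₁ - p z₂ ≤ ω (Γ * ρt) := by
    intro z₁ hz₁ z₂ hz₂
    rw [hmem] at hz₁ hz₂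
    have hx : dist z₁.1 z₂.1 ≤ Γ * ρt := by
      have h1 : dist z₁.1 z₂.1 ≤ dist z₁.1 zt.1 + dist zt.1 z₂.1 := dist_triangle _ _ _
      have h2 : dist zt.1 z₂.1 = dist z₂.1 zt.1 := dist_comm _ _
      have hr : α ^ (d/2 - 1/(p zt)) * ρt ≤ ρt := by
        calc α ^ (d/2 - 1/(p zt)) * ρt ≤ 1 * ρt :=
              mul_le_mul_of_nonneg_right hfac1 hρt.le
          _ = ρt := one_mul _
      have h2ρ : 2 * ρt ≤ Γ * ρt := mul_le_mul_of_nonneg_right hΓ hρt.le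
      linarith [hz₁.1, hz₂.1]
    have ht : Real.sqrt |z₁.2 - z₂.2| ≤ Γ * ρt := by
      have h1 : |z₁.2 - zt.2| < α ^ (d-1) * ρt ^ 2 := by
        rw [abs_sub_lt_iff]; exact ⟨by linarith [hz₁.2.2], by linarith [hz₁.2.1]⟩
      have h2 : |zt.2 - z₂.2| < α ^ (d-1) * ρt ^ 2 := by
        rw [abs_sub_comm, abs_sub_lt_iff]
        exact ⟨by linarith [hz₂.2.2], by linarith [hz₂.2.1]⟩
      have h3 : |z₁.2 - z₂.2| ≤ |z₁.2 - zt.2| + |zt.2 - z₂.2| := abs_sub_le _ _ _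
      have hA : α ^ (d-1) * ρt ^ 2 ≤ ρt ^ 2 := by
        calc α ^ (d-1) * ρt ^ 2 ≤ 1 * ρt ^ 2 :=
              mul_le_mul_of_nonneg_right hfac2 (by positivity)
          _ = ρt ^ 2 := one_mul _
      have hB : 2 * ρt ^ 2 ≤ (Γ * ρt) ^ 2 := by
        have hΓ2 : (0:ℝ) ≤ Γ ^ 2 - 2 := by nlinarith
        nlinarith [mul_nonneg hΓ2 (sq_nonneg ρt)]
      have h4 : |z₁.2 - z₂.2| ≤ (Γ * ρt) ^ 2 := by linarith
      calc Real.sqrt |z₁.2 - z₂.2| ≤ Real.sqrt ((Γ * ρt) ^ 2) := Real.sqrt_le_sqrt h4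
        _ = Γ * ρt := Real.sqrt_sq hΓρpos.le
    have hmax0 : (0:ℝ) ≤ max (dist z₁.1 z₂.1) (Real.sqrt |z₁.2 - z₂.2|) :=
      le_trans dist_nonneg (le_max_left _ _)
    calc p z₁ - p z₂ ≤ |p z₁ - p z₂| := le_abs_self _
      _ ≤ ω (max (dist z₁.1 z₂.1) (Real.sqrt |z₁.2 - z₂.2|)) := hωp z₁ z₂
      _ ≤ ω (Γ * ρt) := hωmono hmax0 hΓρpos.le (max_le hx ht)
  have hosc : sSup (p '' Q) - sInf (p '' Q) ≤ ω (Γ * ρt) := by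
    rw [sub_le_iff_le_add]
    apply csSup_le hSne
    rintro _ ⟨z₁, hz₁, rfl⟩
    have : p z₁ - ω (Γ * ρt) ≤ sInf (p '' Q) := by
      apply le_csInf hSne
      rintro _ ⟨z₂, hz₂, rfl⟩
      linarith [key z₁ hz₁ z₂ hz₂]
    linarith
  refine ⟨hosc, ?_⟩
  set c : ℝ := -(n : ℝ) / pm + (n : ℝ) * d / 2 + d with hcdef
  have hc : 0 < c := by
    have h1 : 2 * (n:ℝ) < d * (((n:ℝ) + 2) * pm) := by
      rw [div_lt_iff₀ (by positivity)] at hd1; linarith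
    have h2 : (n:ℝ) / pm < (n:ℝ) * d / 2 + d := by
      rw [div_lt_iff₀ hpm0]; nlinarith
    simp only [hcdef, neg_div]; linarith
  have hcc' : c ≤ -(n : ℝ) / p zt + (n : ℝ) * d / 2 + d := by
    have : (n:ℝ) / p zt ≤ (n:ℝ) / pm :=
      div_le_div_of_nonneg_left (by positivity) hpm0 (hbd zt).1
    simp only [hcdef, neg_div]; linarith
  have h1 : α ^ c ≤ Γ * ρt ^ (-((n:ℝ)+2)) :=
    le_trans (Real.rpow_le_rpow_of_exponent_le hα hcc') hαbd
  set L : ℝ := Real.log (1/ρt) with hLdef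
  have hLρ : L = -Real.log ρt := by rw [hLdef, one_div, Real.log_inv]
  have hlogα : 0 ≤ Real.log α := Real.log_nonneg hα
  have hlogΓ : 0 < Real.log Γ := Real.log_pos (by linarith)
  have hΓ2ρ : Γ^2 * ρt ≤ S₀ := by
    calc Γ^2 * ρt ≤ Γ^2 * (S₀ / Γ^2) := by nlinarith
      _ = S₀ := by field_simp
  have hΓL : 2 * Real.log Γ ≤ L := by
    have h2 : Γ^2 ≤ 1/ρt := by
      rw [le_div_iff₀ hρt]; nlinarith [hS₀.2]
    have := Real.log_le_log (by positivity) h2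
    rwa [Real.log_pow, Nat.cast_ofNat] at this
  have hclog : c * Real.log α ≤ Real.log Γ + ((n:ℝ)+2) * L := by
    have h2 := Real.log_le_log (Real.rpow_pos_of_pos hα0 c) h1
    rw [Real.log_rpow hα0, Real.log_mul hΓ0.ne' (Real.rpow_pos_of_pos hρt _).ne',
      Real.log_rpow hρt] at h2
    rw [hLρ]; linarith
  have hΓρS : Γ * ρt ≤ S₀ := by nlinarith
  have hsmall : ω (Γ * ρt) * Real.log (1/(Γ * ρt)) ≤ γ := hωlog _ hΓρpos hΓρS
  have hlog1 : Real.log (1/(Γ * ρt)) = L - Real.log Γ := by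
    rw [one_div, Real.log_inv, Real.log_mul hΓ0.ne' hρt.ne', hLρ]; ring
  set w : ℝ := ω (Γ * ρt) with hwdef
  have hw : 0 ≤ w := hωnn _ hΓρpos.le
  have hwb : w * (L - Real.log Γ) ≤ γ := by rw [← hlog1]; exact hsmall
  have h5 : Real.log Γ + ((n:ℝ)+2) * L ≤ (2*(n:ℝ)+5) * (L - Real.log Γ) := by
    nlinarith [mul_nonneg (by linarith : (0:ℝ) ≤ (n:ℝ)+3)
      (by linarith : 0 ≤ L - 2 * Real.log Γ)]
  have h6 : (Real.log Γ + ((n:ℝ)+2) * L) * w ≤ 2*(n:ℝ)+5 := by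
    have ha : (Real.log Γ + ((n:ℝ)+2) * L) * w ≤ ((2*(n:ℝ)+5) * (L - Real.log Γ)) * w :=
      mul_le_mul_of_nonneg_right h5 hw
    have hb : (2*(n:ℝ)+5) * (w * (L - Real.log Γ)) ≤ (2*(n:ℝ)+5) * γ :=
      mul_le_mul_of_nonneg_left hwb (by linarith)
    have hγ1 : γ ≤ 1 := hγ.2
    nlinarith
  have hfinal : Real.log α * w ≤ (2*(n:ℝ)+5) / c := by
    have hlogα' : Real.log α ≤ (Real.log Γ + ((n:ℝ)+2) * L) / c := by
      rw [le_div_iff₀ hc]; linarith [hclog]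
    calc Real.log α * w ≤ ((Real.log Γ + ((n:ℝ)+2) * L) / c) * w :=
          mul_le_mul_of_nonneg_right hlogα' hw
      _ = ((Real.log Γ + ((n:ℝ)+2) * L) * w) / c := by ring
      _ ≤ (2*(n:ℝ)+5) / c := (div_le_div_iff_of_pos_right hc).mpr h6
  calc α ^ (sSup (p '' Q) - sInf (p '' Q))
      = Real.exp (Real.log α * (sSup (p '' Q) - sInf (p '' Q))) :=
        Real.rpow_def_of_pos hα0 _
    _ ≤ Real.exp ((2*(n:ℝ)+5) / c) := by
        apply Real.exp_le_exp.mpr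
        calc Real.log α * (sSup (p '' Q) - sInf (p '' Q)) ≤ Real.log α * w :=
              mul_le_mul_of_nonneg_left hosc hlogα
          _ ≤ (2*(n:ℝ)+5) / c := hfinal
end

section
/- Let n ≥ 1, p ∈ (1, ∞), μ ∈ [0, 1] and Λ₀ > 0. Let A : ℝⁿ → ℝⁿ be continuous on ℝⁿ and differentiable at every ζ ∈ ℝⁿ with μ² + |ζ|² > 0, and assume the ellipticity condition ⟨DA(ζ) η, η⟩ ≥ Λ₀ · (μ² + |ζ|²)^{(p−2)/2} · |η|² for every such ζ and every η ∈ ℝⁿ, where DA(ζ) denotes the derivative (Jacobian) of A at ζ. Then there exists a constant Λ̃₀ > 0, depending only on Λ₀, n and p, such that for all ζ, η ∈ ℝⁿ with μ² + |ζ|² + |η|² > 0, ⟨A(ζ) − A(η), ζ − η⟩ ≥ Λ̃₀ · (μ² + |ζ|² + |η|²)^{(p−2)/2} · |ζ − η|². -/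
/-!
Put `u = ζ - η` and restrict to the segment: `g t = ⟪A (η + t • u), u⟫` has derivative
`⟪DA(η + t • u) u, u⟫ ≥ Λ₀ (μ² + |η + t • u|²)^q |u|² ≥ 0` except at the at most one `t`
where `η + t • u = 0`, so `g` is monotone. On the quarter of `[0, 1]` next to the endpoint of
larger norm, `μ² + |η + t • u|²` lies between `S / 8` and `S`, where `S = μ² + |ζ|² + |η|²`, so
there `g' ≥ Λ₀ 8^(-|q|) S^q |u|²`. Hence `⟪A ζ - A η, u⟫ = g 1 - g 0 ≥ Λ₀ 8^(-|q|) / 4 · S^q |u|²`.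
-/

open Set
open scoped RealInnerProductSpace

lemma rpow_neg_abs_mul_rpow_le_rpow {c S x : ℝ} (q : ℝ) (hc : 1 ≤ c) (hS : 0 < S)
    (hlow : S / c ≤ x) (hhigh : x ≤ S) : c ^ (-|q|) * S ^ q ≤ x ^ q := by
  have hc₀ : 0 < c := by linarith
  rcases le_or_gt 0 q with hq | hq
  · calc c ^ (-|q|) * S ^ q = (S / c) ^ q := by
          rw [abs_of_nonneg hq, Real.rpow_neg hc₀.le, Real.div_rpow hS.le hc₀.le, inv_mul_eq_div]
      _ ≤ x ^ q := Real.rpow_le_rpow (by positivity) hlow hq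
  · calc c ^ (-|q|) * S ^ q ≤ 1 * S ^ q := by
          gcongr
          exact Real.rpow_le_one_of_one_le_of_nonpos hc (by simp)
      _ ≤ x ^ q := by
          rw [one_mul]
          exact Real.rpow_le_rpow_of_nonpos ((div_pos hS hc₀).trans_le hlow) hhigh hq.le

lemma monotone_of_deriv_nonneg_of_ne {g : ℝ → ℝ} (hg : Continuous g) (t₀ : ℝ)
    (hg' : ∀ t ≠ t₀, DifferentiableAt ℝ g t ∧ 0 ≤ deriv g t) : Monotone g := by
  have hmonoOn : ∀ D : Set ℝ, Convex ℝ D → t₀ ∉ interior D → MonotoneOn g D := fun D hD ht₀ =>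
    monotoneOn_of_deriv_nonneg hD hg.continuousOn
      (fun t ht => (hg' t (ne_of_mem_of_not_mem ht ht₀)).1.differentiableWithinAt)
      (fun t ht => (hg' t (ne_of_mem_of_not_mem ht ht₀)).2)
  exact MonotoneOn.Iic_union_Ici (hmonoOn _ (convex_Iic t₀) (by simp))
    (hmonoOn _ (convex_Ici t₀) (by simp))

section Segment

variable {E : Type*} [NormedAddCommGroup E] [NormedSpace ℝ E]

lemma exists_forall_ne_add_smul_ne_zero {u : E} (hu : u ≠ 0) (η : E) :
    ∃ t₀ : ℝ, ∀ t ≠ t₀, η + t • u ≠ 0 := by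
  by_cases h : ∃ t₀ : ℝ, η + t₀ • u = 0
  · obtain ⟨t₀, ht₀⟩ := h
    refine ⟨t₀, fun t ht h0 => ?_⟩
    have : (t - t₀) • u = 0 := by rw [sub_smul, ← add_sub_add_left_eq_sub _ _ η, h0, ht₀, sub_self]
    exact ht (sub_eq_zero.mp ((smul_eq_zero.mp this).resolve_right hu))
  · push Not at h
    exact ⟨0, fun t _ => h t⟩

lemma norm_add_smul_sub_le_max (ζ η : E) {t : ℝ} (ht : t ∈ Icc (0 : ℝ) 1) :
    ‖η + t • (ζ - η)‖ ≤ max ‖ζ‖ ‖η‖ := by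
  have hmem : η + t • (ζ - η) ∈ segment ℝ η ζ := by
    rw [segment_eq_image']
    exact ⟨t, ht, rfl⟩
  simpa using (convex_closedBall (0 : E) (max ‖ζ‖ ‖η‖)).segment_subset
    (by simp) (by simp) hmem

lemma sq_norm_add_smul_sub_le (ζ η : E) {t : ℝ} (ht : t ∈ Icc (0 : ℝ) 1) :
    ‖η + t • (ζ - η)‖ ^ 2 ≤ ‖ζ‖ ^ 2 + ‖η‖ ^ 2 := by
  have h := norm_add_smul_sub_le_max ζ η ht
  rcases le_total ‖ζ‖ ‖η‖ with hle | hle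
  · rw [max_eq_right hle] at h
    nlinarith [norm_nonneg (η + t • (ζ - η))]
  · rw [max_eq_left hle] at h
    nlinarith [norm_nonneg (η + t • (ζ - η))]

lemma sq_norm_add_sq_norm_le_eight_mul {ζ η : E} (hηζ : ‖η‖ ≤ ‖ζ‖) {t : ℝ}
    (ht : t ∈ Icc (3 / 4 : ℝ) 1) :
    ‖ζ‖ ^ 2 + ‖η‖ ^ 2 ≤ 8 * ‖η + t • (ζ - η)‖ ^ 2 := by
  have hdist : ‖ζ - (η + t • (ζ - η))‖ ≤ ‖ζ‖ / 2 := by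
    have : ζ - (η + t • (ζ - η)) = (1 - t) • (ζ - η) := by module
    rw [this, norm_smul, Real.norm_of_nonneg (by linarith [ht.2])]
    nlinarith [norm_sub_le ζ η, norm_nonneg (ζ - η), ht.1]
  have hhalf : ‖ζ‖ / 2 ≤ ‖η + t • (ζ - η)‖ := by
    linarith [norm_sub_norm_le ζ (η + t • (ζ - η))]
  nlinarith [norm_nonneg η]

lemma exists_quarter_Icc_sq_norm_add_sq_norm_le (ζ η : E) :
    ∃ a ∈ Icc (0 : ℝ) (3 / 4), ∀ t ∈ Icc a (a + 1 / 4),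
      ‖ζ‖ ^ 2 + ‖η‖ ^ 2 ≤ 8 * ‖η + t • (ζ - η)‖ ^ 2 := by
  rcases le_total ‖η‖ ‖ζ‖ with hle | hle
  · refine ⟨3 / 4, by norm_num, fun t ht => sq_norm_add_sq_norm_le_eight_mul hle ?_⟩
    exact ⟨ht.1, by linarith [ht.2]⟩
  · refine ⟨0, by norm_num, fun t ht => ?_⟩
    have hsymm : η + t • (ζ - η) = ζ + (1 - t) • (η - ζ) := by module
    rw [hsymm, add_comm (‖ζ‖ ^ 2)]
    exact sq_norm_add_sq_norm_le_eight_mul hle ⟨by linarith [ht.2], by linarith [ht.1]⟩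

end Segment

section Monotonicity

variable {E : Type*} [NormedAddCommGroup E] [InnerProductSpace ℝ E] {A : E → E}

lemma hasDerivAt_inner_comp_add_smul {η u : E} {t : ℝ}
    (hA : DifferentiableAt ℝ A (η + t • u)) :
    HasDerivAt (fun s : ℝ => ⟪A (η + s • u), u⟫) ⟪fderiv ℝ A (η + t • u) u, u⟫ t := by
  have hline : HasDerivAt (fun s : ℝ => η + s • u) u t := by
    simpa using ((hasDerivAt_id t).smul_const u).const_add η
  simpa using (hA.hasFDerivAt.comp_hasDerivAt t hline).inner ℝ (hasDerivAt_const t u)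

theorem le_inner_sub_sub_of_fderiv_coercive {μ Λ₀ q : ℝ} (hΛ₀ : 0 ≤ Λ₀) (hA : Continuous A)
    (hdiff : ∀ ζ : E, 0 < μ ^ 2 + ‖ζ‖ ^ 2 → DifferentiableAt ℝ A ζ)
    (hell : ∀ ζ : E, 0 < μ ^ 2 + ‖ζ‖ ^ 2 →
      ∀ η : E, Λ₀ * (μ ^ 2 + ‖ζ‖ ^ 2) ^ q * ‖η‖ ^ 2 ≤ ⟪fderiv ℝ A ζ η, η⟫)
    (ζ η : E) (hpos : 0 < μ ^ 2 + ‖ζ‖ ^ 2 + ‖η‖ ^ 2) :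
    Λ₀ * 8 ^ (-|q|) / 4 * (μ ^ 2 + ‖ζ‖ ^ 2 + ‖η‖ ^ 2) ^ q * ‖ζ - η‖ ^ 2
      ≤ ⟪A ζ - A η, ζ - η⟫ := by
  rcases eq_or_ne ζ η with rfl | hu
  · simp
  obtain ⟨a, ha, hquarter⟩ := exists_quarter_Icc_sq_norm_add_sq_norm_le ζ η
  have hupper := fun t (ht : t ∈ Icc (0 : ℝ) 1) => sq_norm_add_smul_sub_le ζ η ht
  set u := ζ - η
  set S := μ ^ 2 + ‖ζ‖ ^ 2 + ‖η‖ ^ 2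
  set g : ℝ → ℝ := fun s => ⟪A (η + s • u), u⟫
  have hg : Continuous g := by fun_prop
  have hderiv : ∀ t : ℝ, 0 < μ ^ 2 + ‖η + t • u‖ ^ 2 →
      DifferentiableAt ℝ g t ∧ Λ₀ * (μ ^ 2 + ‖η + t • u‖ ^ 2) ^ q * ‖u‖ ^ 2 ≤ deriv g t :=
    fun t ht => have h := hasDerivAt_inner_comp_add_smul (hdiff _ ht)
      ⟨h.differentiableAt, h.deriv ▸ hell _ ht u⟩
  have hmono : Monotone g := by
    obtain ⟨t₀, ht₀⟩ := exists_forall_ne_add_smul_ne_zero (sub_ne_zero.mpr hu) η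
    refine monotone_of_deriv_nonneg_of_ne hg t₀ fun t ht => ?_
    have hw : 0 < μ ^ 2 + ‖η + t • u‖ ^ 2 := by
      have := norm_pos_iff.mpr (ht₀ t ht)
      positivity
    exact ⟨(hderiv t hw).1, le_trans (by positivity) (hderiv t hw).2⟩
  have hgain : Λ₀ * 8 ^ (-|q|) * S ^ q * ‖u‖ ^ 2 * (a + 1 / 4 - a) ≤ g (a + 1 / 4) - g a := by
    have hweight : ∀ t ∈ Icc a (a + 1 / 4), S / 8 ≤ μ ^ 2 + ‖η + t • u‖ ^ 2 ∧
        μ ^ 2 + ‖η + t • u‖ ^ 2 ≤ S := fun t ht =>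
      ⟨by linarith [hquarter t ht, sq_nonneg μ],
        by linarith [hupper t ⟨by linarith [ht.1, ha.1], by linarith [ht.2, ha.2]⟩]⟩
    have hw : ∀ t ∈ Icc a (a + 1 / 4), 0 < μ ^ 2 + ‖η + t • u‖ ^ 2 := fun t ht =>
      lt_of_lt_of_le (by positivity) (hweight t ht).1
    refine (convex_Icc a (a + 1 / 4)).mul_sub_le_image_sub_of_le_deriv hg.continuousOn
      (fun t ht => (hderiv t (hw t (interior_subset ht))).1.differentiableWithinAt)
      (fun t ht => ?_) a (by simp) (a + 1 / 4) (by simp) (by linarith)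
    have ht' := interior_subset ht
    refine le_trans ?_ (hderiv t (hw t ht')).2
    have := rpow_neg_abs_mul_rpow_le_rpow q (by norm_num : (1 : ℝ) ≤ 8) hpos
      (hweight t ht').1 (hweight t ht').2
    rw [mul_assoc Λ₀]
    exact mul_le_mul_of_nonneg_right (mul_le_mul_of_nonneg_left this hΛ₀) (sq_nonneg _)
  calc Λ₀ * 8 ^ (-|q|) / 4 * S ^ q * ‖u‖ ^ 2
      = Λ₀ * 8 ^ (-|q|) * S ^ q * ‖u‖ ^ 2 * (a + 1 / 4 - a) := by ring
    _ ≤ g (a + 1 / 4) - g a := hgain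
    _ ≤ g 1 - g 0 := sub_le_sub (hmono (by linarith [ha.2])) (hmono ha.1)
    _ = ⟪A ζ - A η, u⟫ := by simp [g, u, inner_sub_left]

end Monotonicity

theorem stmt15_general (n : ℕ) (p : ℝ) (Λ₀ : ℝ) (hΛ₀ : 0 < Λ₀) :
    ∃ c : ℝ, 0 < c ∧
      ∀ μ : ℝ, μ ∈ Set.Icc (0 : ℝ) 1 →
      ∀ A : EuclideanSpace ℝ (Fin n) → EuclideanSpace ℝ (Fin n),
        Continuous A →
        (∀ ζ : EuclideanSpace ℝ (Fin n), 0 < μ ^ 2 + ‖ζ‖ ^ 2 → DifferentiableAt ℝ A ζ) →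
        (∀ ζ : EuclideanSpace ℝ (Fin n), 0 < μ ^ 2 + ‖ζ‖ ^ 2 →
          ∀ η : EuclideanSpace ℝ (Fin n),
            Λ₀ * (μ ^ 2 + ‖ζ‖ ^ 2) ^ ((p - 2) / 2) * ‖η‖ ^ 2
              ≤ ⟪(fderiv ℝ A ζ) η, η⟫) →
        ∀ ζ η : EuclideanSpace ℝ (Fin n), 0 < μ ^ 2 + ‖ζ‖ ^ 2 + ‖η‖ ^ 2 →
          c * (μ ^ 2 + ‖ζ‖ ^ 2 + ‖η‖ ^ 2) ^ ((p - 2) / 2) * ‖ζ - η‖ ^ 2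
            ≤ ⟪A ζ - A η, ζ - η⟫ :=
  ⟨Λ₀ * 8 ^ (-|(p - 2) / 2|) / 4, by positivity, fun _ _ _ hA hdiff hell =>
    le_inner_sub_sub_of_fderiv_coercive hΛ₀.le hA hdiff hell⟩

/-- **Monotonicity from ellipticity for `p`-Laplacian type operators.**
Let `p ∈ (1,∞)`, `μ ∈ [0,1]`, `Λ₀ > 0` and let `A : ℝⁿ → ℝⁿ` be continuous, differentiable
at every `ζ` with `μ² + |ζ|² > 0`, satisfying
`⟨DA(ζ) η, η⟩ ≥ Λ₀ (μ² + |ζ|²)^{(p−2)/2} |η|²`.  Then there is `Λ̃₀ = Λ̃₀(Λ₀, n, p) > 0`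
with `⟨A(ζ) − A(η), ζ − η⟩ ≥ Λ̃₀ (μ² + |ζ|² + |η|²)^{(p−2)/2} |ζ − η|²` whenever
`μ² + |ζ|² + |η|² > 0`. -/
theorem stmt15 (n : ℕ) (hn : 1 ≤ n) (p : ℝ) (hp : 1 < p) (Λ₀ : ℝ) (hΛ₀ : 0 < Λ₀) :
    ∃ c : ℝ, 0 < c ∧
      ∀ μ : ℝ, μ ∈ Set.Icc (0 : ℝ) 1 →
      ∀ A : EuclideanSpace ℝ (Fin n) → EuclideanSpace ℝ (Fin n),
        Continuous A →
        (∀ ζ : EuclideanSpace ℝ (Fin n), 0 < μ ^ 2 + ‖ζ‖ ^ 2 → DifferentiableAt ℝ A ζ) →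
        (∀ ζ : EuclideanSpace ℝ (Fin n), 0 < μ ^ 2 + ‖ζ‖ ^ 2 →
          ∀ η : EuclideanSpace ℝ (Fin n),
            Λ₀ * (μ ^ 2 + ‖ζ‖ ^ 2) ^ ((p - 2) / 2) * ‖η‖ ^ 2
              ≤ ⟪(fderiv ℝ A ζ) η, η⟫) →
        ∀ ζ η : EuclideanSpace ℝ (Fin n), 0 < μ ^ 2 + ‖ζ‖ ^ 2 + ‖η‖ ^ 2 →
          c * (μ ^ 2 + ‖ζ‖ ^ 2 + ‖η‖ ^ 2) ^ ((p - 2) / 2) * ‖ζ - η‖ ^ 2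
            ≤ ⟪A ζ - A η, ζ - η⟫ :=
  stmt15_general n p Λ₀ hΛ₀
end
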